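/- arXiv:0809.0135 — 7 statements merged into one kernel-verified Lean document; each statement's English description precedes it below -/
import Mathlib

section
/- Let φ, α : ℂ → ℂ be entire functions and define A₀(x,y) = α(x), A_{n+1}(x,y) = y·∂A_n/∂x(x,y) − φ'(x)·∂A_n/∂y(x,y) (so A_n = X_h^n α for the Hamiltonian vector field X_h = y ∂/∂x − φ'(x) ∂/∂y of h = y²/2 + φ(x)). If A₅(x,y) = 0 for all (x,y) ∈ ℂ² and the fourth derivative α⁗ is not identically zero, then α is a polynomial of degree exactly 4 and φ' ≡ 0 (i.e., φ is constant). -/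
/-!
The fifth Lie derivative is an odd polynomial in `y` whose `y⁵`- and `y³`-coefficients are,
up to sign, `α⁽⁵⁾` and `10 u α⁗ + 10 u' α''' + 5 u'' α'' + u''' α'`, where `u = φ'`. The first vanishing
makes `α` a quartic, so `a = α'` is a cubic polynomial and the second one is the linear ODE
`a u''' + 5 a' u'' + 10 a'' u' + 10 a''' u = 0`. For an entire `Ψ` with `Ψ'' = u`, Leibniz's rule
identifies the left-hand side with `(a Ψ)⁽⁵⁾`, so `a Ψ` is a polynomial of degree at most `4`.
Dividing by the cubic `a` (possible because `Ψ` is entire) shows that `Ψ` is a polynomial of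
degree at most `1`, hence `u = Ψ'' = 0`.
-/

section

open Polynomial

theorem Differentiable.hasDerivAt_iteratedDeriv {f : ℂ → ℂ} (hf : Differentiable ℂ f) (k : ℕ)
    (x : ℂ) : HasDerivAt (iteratedDeriv k f) (iteratedDeriv (k + 1) f x) x := by
  rw [iteratedDeriv_succ]
  exact (hf.contDiff.differentiable_iteratedDeriv k (WithTop.coe_lt_top _) x).hasDerivAt

theorem Polynomial.iteratedDeriv_eval (p : ℂ[X]) (k : ℕ) :
    iteratedDeriv k (fun x => p.eval x) = fun x => (derivative^[k] p).eval x := by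
  induction k generalizing p with
  | zero => simp
  | succ k ih =>
    rw [iteratedDeriv_succ', Function.iterate_succ_apply, ← ih]
    congr 1
    funext x
    exact p.deriv

theorem Differentiable.exists_polynomial_of_iteratedDeriv_eq_zero {f : ℂ → ℂ}
    (hf : Differentiable ℂ f) {n : ℕ} (h : ∀ x, iteratedDeriv n f x = 0) :
    ∃ P : ℂ[X], P.degree < n ∧ ∀ x, f x = P.eval x := by
  have hvanish : ∀ k, n ≤ k → iteratedDeriv k f = 0 := by
    intro k hk
    obtain ⟨j, rfl⟩ := Nat.exists_eq_add_of_le hk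
    rw [iteratedDeriv_eq_iterate, add_comm, Function.iterate_add_apply,
      ← iteratedDeriv_eq_iterate (n := n), funext h, ← iteratedDeriv_eq_iterate]
    funext x
    simp
  set c : ℕ → ℂ := fun k => (k.factorial : ℂ)⁻¹ * iteratedDeriv k f 0
  refine ⟨∑ k : Fin n, C (c k) * X ^ (k : ℕ), degree_sum_fin_lt _, fun x => ?_⟩
  refine (Complex.hasSum_taylorSeries_of_entire hf 0 x).unique ?_
  convert hasSum_sum_of_ne_finset_zero (L := SummationFilter.unconditional ℕ)
    (s := Finset.range n) fun k hk => ?_ using 1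
  · simp only [eval_finsetSum, eval_mul, eval_C, eval_pow, eval_X, sub_zero, smul_eq_mul]
    rw [Fin.sum_univ_eq_sum_range (fun k => c k * x ^ k)]
    exact Finset.sum_congr rfl fun k _ => by ring
  · simp [hvanish k (by simpa using hk)]

theorem Differentiable.exists_polynomial_natDegree_eq {f : ℂ → ℂ} (hf : Differentiable ℂ f)
    {n : ℕ} (h : ∀ x, iteratedDeriv (n + 1) f x = 0) (hn : ∃ x, iteratedDeriv n f x ≠ 0) :
    ∃ P : ℂ[X], P.natDegree = n ∧ ∀ x, f x = P.eval x := by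
  obtain ⟨P, hPdeg, hfP⟩ := hf.exists_polynomial_of_iteratedDeriv_eq_zero h
  obtain ⟨x₀, hx₀⟩ := hn
  have hPn : derivative^[n] P ≠ 0 := fun hP => hx₀ (by simp [funext hfP, iteratedDeriv_eval, hP])
  have hP0 : P ≠ 0 := by rintro rfl; simp at hPn
  refine ⟨P, le_antisymm ?_ ?_, hfP⟩
  · exact Nat.lt_succ_iff.mp ((natDegree_lt_iff_degree_lt hP0).mpr hPdeg)
  · exact not_lt.mp fun hlt => hPn (iterate_derivative_eq_zero hlt)

theorem Polynomial.exists_eq_X_sub_C_mul_of_eval_mul_eq {r : ℂ} {h : ℂ → ℂ} (hh : Continuous h)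
    {q : ℂ[X]} (hq : ∀ x, (x - r) * h x = q.eval x) :
    ∃ s : ℂ[X], q = (X - C r) * s ∧ ∀ x, h x = s.eval x := by
  obtain ⟨s, rfl⟩ : X - C r ∣ q := dvd_iff_isRoot.mpr (by simpa using (hq r).symm)
  refine ⟨s, rfl, fun x => ?_⟩
  refine congrFun (hh.ext_on (dense_compl_singleton r) s.continuous fun y hy => ?_) x
  have hyr : y - r ≠ 0 := sub_ne_zero.mpr hy
  exact mul_left_cancel₀ hyr (by simpa using hq y)

theorem Polynomial.exists_eq_mul_of_eval_mul_eq {p : ℂ[X]} (hp : p ≠ 0) {h : ℂ → ℂ}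
    (hh : Continuous h) {q : ℂ[X]} (hq : ∀ x, p.eval x * h x = q.eval x) :
    ∃ s : ℂ[X], q = p * s ∧ ∀ x, h x = s.eval x := by
  induction hn : p.natDegree generalizing p q with
  | zero =>
    rw [eq_C_of_natDegree_eq_zero hn] at hp hq ⊢
    have hc : p.coeff 0 ≠ 0 := by simpa using hp
    refine ⟨C (p.coeff 0)⁻¹ * q, ?_, fun x => ?_⟩
    · rw [← mul_assoc, ← C_mul, mul_inv_cancel₀ hc, C_1, one_mul]
    · simp [← hq x, hc]
  | succ n ih =>
    obtain ⟨r, hr⟩ := Complex.exists_root (f := p)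
      (natDegree_pos_iff_degree_pos.mp (by omega))
    obtain ⟨p₁, rfl⟩ := dvd_iff_isRoot.mpr hr
    have hp₁ : p₁ ≠ 0 := right_ne_zero_of_mul hp
    obtain ⟨q₁, rfl, hq₁⟩ := exists_eq_X_sub_C_mul_of_eval_mul_eq (hh := (p₁.continuous.mul hh))
      (q := q) fun x => by simpa [mul_assoc] using hq x
    obtain ⟨s, rfl, hs⟩ := ih hp₁ (fun x => hq₁ x) (by
      rw [natDegree_mul (X_sub_C_ne_zero r) hp₁, natDegree_X_sub_C] at hn; omega)
    exact ⟨s, (mul_assoc _ _ _).symm, hs⟩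

theorem Differentiable.exists_iteratedDeriv_two_eq {u : ℂ → ℂ} (hu : Differentiable ℂ u) :
    ∃ Ψ : ℂ → ℂ, Differentiable ℂ Ψ ∧ ∀ k, iteratedDeriv (k + 2) Ψ = iteratedDeriv k u := by
  obtain ⟨v, hv⟩ := hu.isExactOn_univ
  have hv' : Differentiable ℂ v := fun z => (hv z trivial).differentiableAt
  obtain ⟨Ψ, hΨ⟩ := hv'.isExactOn_univ
  refine ⟨Ψ, fun z => (hΨ z trivial).differentiableAt, fun k => ?_⟩
  rw [iteratedDeriv_succ', iteratedDeriv_succ', funext fun z => (hΨ z trivial).deriv,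
    funext fun z => (hv z trivial).deriv]

theorem eq_zero_of_cubic_ode {p : ℂ[X]} (hp : p.natDegree = 3) {a u : ℂ → ℂ}
    (ha : ∀ x, a x = p.eval x) (hu : Differentiable ℂ u)
    (hode : ∀ x, a x * iteratedDeriv 3 u x + 5 * deriv a x * iteratedDeriv 2 u x
      + 10 * iteratedDeriv 2 a x * deriv u x + 10 * iteratedDeriv 3 a x * u x = 0)
    (x : ℂ) : u x = 0 := by
  obtain ⟨Ψ, hΨ, hΨu⟩ := hu.exists_iteratedDeriv_two_eq
  have ha_eq : a = fun x => p.eval x := funext ha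
  have ha4 : ∀ k, 4 ≤ k → iteratedDeriv k a = 0 := fun k hk => by
    rw [ha_eq, Polynomial.iteratedDeriv_eval, iterate_derivative_eq_zero (by omega)]
    exact funext fun _ => eval_zero
  have h5 : ∀ x, iteratedDeriv 5 (a * Ψ) x = 0 := fun x => by
    rw [iteratedDeriv_mul (ha_eq ▸ p.differentiable).contDiff.contDiffAt hΨ.contDiff.contDiffAt]
    simp only [Finset.sum_range_succ, Finset.sum_range_zero, Nat.choose, ha4 4 le_rfl,
      ha4 5 (by norm_num), Pi.zero_apply, hΨu 3, hΨu 2, hΨu 1, hΨu 0, iteratedDeriv_zero,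
      iteratedDeriv_one]
    linear_combination hode x
  obtain ⟨q, hq, hpq⟩ :=
    ((ha_eq ▸ p.differentiable).mul hΨ).exists_polynomial_of_iteratedDeriv_eq_zero h5
  have hp0 : p ≠ 0 := by rintro rfl; simp at hp
  obtain ⟨s, rfl, hs⟩ :=
    exists_eq_mul_of_eval_mul_eq hp0 hΨ.continuous (q := q) fun x => by rw [← ha x, ← hpq x]; rfl
  have hs1 : s.natDegree < 2 := by
    rcases eq_or_ne s 0 with rfl | hs0
    · simp
    · have hdeg := (natDegree_lt_iff_degree_lt (mul_ne_zero hp0 hs0)).mpr hq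
      rw [natDegree_mul hp0 hs0, hp] at hdeg
      omega
  rw [← iteratedDeriv_zero (f := u), ← hΨu, funext hs, Polynomial.iteratedDeriv_eval,
    iterate_derivative_eq_zero hs1]
  exact eval_zero

end

section LieDerivatives

variable {u a : ℕ → ℂ → ℂ} {A : ℕ → ℂ × ℂ → ℂ}

theorem lieDeriv_succ_eq (hArec : ∀ n x y, A (n + 1) (x, y) =
      y * deriv (fun s => A n (s, y)) x - u 0 x * deriv (fun s => A n (x, s)) y)
    {n : ℕ} (F : ℂ → ℂ → ℂ) (hF : ∀ x y, A n (x, y) = F x y)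
    {x y Fx Fy : ℂ} (hx : HasDerivAt (fun s => F s y) Fx x) (hy : HasDerivAt (F x) Fy y) :
    A (n + 1) (x, y) = y * Fx - u 0 x * Fy := by
  simp only [hArec, hF, hx.deriv, hy.deriv]

theorem lieDeriv_three_eq (hu : ∀ k x, HasDerivAt (u k) (u (k + 1) x) x)
    (ha : ∀ k x, HasDerivAt (a k) (a (k + 1) x) x) (hA0 : ∀ x y, A 0 (x, y) = a 0 x)
    (hArec : ∀ n x y, A (n + 1) (x, y) =
      y * deriv (fun s => A n (s, y)) x - u 0 x * deriv (fun s => A n (x, s)) y) (x y : ℂ) :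
    A 3 (x, y) = y ^ 3 * a 3 x - y * (3 * u 0 x * a 2 x + u 1 x * a 1 x) := by
  have h1 : ∀ x y, A 1 (x, y) = y * a 1 x := fun x y => by
    rw [lieDeriv_succ_eq hArec (fun x _ => a 0 x) hA0 (ha 0 x) (hasDerivAt_const y _)]
    ring
  have h2 : ∀ x y, A 2 (x, y) = y ^ 2 * a 2 x - u 0 x * a 1 x := fun x y => by
    rw [lieDeriv_succ_eq hArec (fun x y => y * a 1 x) h1 ((ha 1 x).const_mul y)
      (hasDerivAt_mul_const _)]
    ring
  rw [lieDeriv_succ_eq hArec (fun x y => y ^ 2 * a 2 x - u 0 x * a 1 x) h2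
    (((ha 2 x).const_mul _).sub ((hu 0 x).mul (ha 1 x)))
    (((hasDerivAt_pow 2 y).mul_const _).sub_const _)]
  push_cast
  ring

theorem lieDeriv_five_eq (hu : ∀ k x, HasDerivAt (u k) (u (k + 1) x) x)
    (ha : ∀ k x, HasDerivAt (a k) (a (k + 1) x) x) (hA0 : ∀ x y, A 0 (x, y) = a 0 x)
    (hArec : ∀ n x y, A (n + 1) (x, y) =
      y * deriv (fun s => A n (s, y)) x - u 0 x * deriv (fun s => A n (x, s)) y) (x y : ℂ) :
    A 5 (x, y) = y ^ 5 * a 5 x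
      - y ^ 3 * (10 * u 0 x * a 4 x + 10 * u 1 x * a 3 x + 5 * u 2 x * a 2 x + u 3 x * a 1 x)
      + y * (15 * u 0 x ^ 2 * a 3 x + 15 * u 0 x * u 1 x * a 2 x
        + (u 1 x ^ 2 + 3 * u 0 x * u 2 x) * a 1 x) := by
  have h4 : ∀ x y, A 4 (x, y) = y ^ 4 * a 4 x
      - y ^ 2 * (6 * u 0 x * a 3 x + 4 * u 1 x * a 2 x + u 2 x * a 1 x)
      + (3 * u 0 x ^ 2 * a 2 x + u 0 x * u 1 x * a 1 x) := fun x y => by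
    rw [lieDeriv_succ_eq hArec _ (lieDeriv_three_eq hu ha hA0 hArec)
      (((ha 3 x).const_mul _).sub
        (((((hu 0 x).const_mul 3).mul (ha 2 x)).add ((hu 1 x).mul (ha 1 x))).const_mul y))
      (((hasDerivAt_pow 3 y).mul_const _).sub (hasDerivAt_mul_const _))]
    push_cast
    ring
  rw [lieDeriv_succ_eq hArec _ h4
    ((((ha 4 x).const_mul _).sub ((((((hu 0 x).const_mul 6).mul (ha 3 x)).add
      (((hu 1 x).const_mul 4).mul (ha 2 x))).add ((hu 2 x).mul (ha 1 x))).const_mul _)).add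
      (((((hu 0 x).pow 2).const_mul 3).mul (ha 2 x)).add (((hu 0 x).mul (hu 1 x)).mul (ha 1 x))))
    ((((hasDerivAt_pow 4 y).mul_const _).sub ((hasDerivAt_pow 2 y).mul_const _)).add_const _)]
  simp only [Pi.mul_apply, Pi.pow_apply]
  push_cast
  ring

end LieDerivatives

theorem eq_zero_and_eq_zero_of_forall_odd_quintic_eq_zero {c₁ c₃ c₅ : ℂ}
    (h : ∀ y : ℂ, y ^ 5 * c₅ - y ^ 3 * c₃ + y * c₁ = 0) : c₅ = 0 ∧ c₃ = 0 := by
  have h1 := h 1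
  have h2 := h 2
  have h3 := h 3
  constructor
  · linear_combination (5 * h1 - 4 * h2 + h3) / 120
  · linear_combination (13 * h1 - 8 * h2 + h3) / 24

/-- For entire `φ, α : ℂ → ℂ`, let `A n = X_h^n α` be the iterated Lie
derivatives along the Hamiltonian vector field `X_h = y ∂/∂x − φ'(x) ∂/∂y` of
`h = y²/2 + φ(x)`, i.e. `A 0 (x,y) = α x` and
`A (n+1) (x,y) = y ∂A_n/∂x − φ'(x) ∂A_n/∂y`. If `A 5 ≡ 0` on `ℂ²` and `α⁗` is not
identically zero, then `α` is a polynomial of degree exactly `4` and `φ' ≡ 0`. -/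
theorem statement1
    (φ α : ℂ → ℂ) (hφ : Differentiable ℂ φ) (hα : Differentiable ℂ α)
    (A : ℕ → ℂ × ℂ → ℂ)
    (hA0 : ∀ x y : ℂ, A 0 (x, y) = α x)
    (hArec : ∀ (n : ℕ) (x y : ℂ),
      A (n + 1) (x, y) =
        y * deriv (fun s => A n (s, y)) x - deriv φ x * deriv (fun s => A n (x, s)) y)
    (h5 : ∀ x y : ℂ, A 5 (x, y) = 0)
    (hα4 : ∃ x : ℂ, iteratedDeriv 4 α x ≠ 0) :
    (∃ P : Polynomial ℂ, P.degree = 4 ∧ ∀ x : ℂ, α x = P.eval x) ∧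
      ∀ x : ℂ, deriv φ x = 0 := by
  have hA5 := lieDeriv_five_eq hφ.deriv.hasDerivAt_iteratedDeriv hα.hasDerivAt_iteratedDeriv
    (by simpa using hA0) (by simpa using hArec)
  have hcoeff x := eq_zero_and_eq_zero_of_forall_odd_quintic_eq_zero fun y =>
    (hA5 x y).symm.trans (h5 x y)
  obtain ⟨P, hP4, hαP⟩ := hα.exists_polynomial_natDegree_eq (fun x => (hcoeff x).1) hα4
  refine ⟨⟨P, (Polynomial.degree_eq_iff_natDegree_eq_of_pos four_pos).mpr hP4, hαP⟩,
    eq_zero_of_cubic_ode (p := Polynomial.derivative P) (a := deriv α) ?_ ?_ hφ.deriv ?_⟩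
  · rw [Polynomial.natDegree_derivative, hP4]
  · intro x
    rw [funext hαP]
    exact P.deriv
  · intro x
    have hode := (hcoeff x).2
    simp only [iteratedDeriv_succ', iteratedDeriv_zero] at hode ⊢
    linear_combination hode
end

section
/- Let φ, α : ℂ → ℂ be entire functions, let m ∈ ℕ, and let Q be a polynomial in m+1 variables over ℂ. Then the following are equivalent: (i) for every open real interval I and every solution x : I → ℂ of the second-order ODE x''(t) = −φ'(x(t)), the function t ↦ Q(a(t), a'(t), …, a⁽ᵐ⁾(t)) vanishes identically on I, where a(t) = α(x(t)); (ii) the function (x,y) ↦ Q(A₀(x,y), A₁(x,y), …, A_m(x,y)) vanishes identically on ℂ². -/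
/-!
Along a solution `(x, v)` of `x' = v`, `v' = -φ'(x)` the chain rule gives
`d/dt A_n(x, v) = (X_h A_n)(x, v) = A_{n+1}(x, v)`, so `a⁽ⁿ⁾(t) = A_n(x(t), v(t))` and
`Q(a, …, a⁽ᵐ⁾)` is `Q(A_0, …, A_m)` read along the solution; this is (ii) ⇒ (i). Conversely,
by Picard–Lindelöf every point `(x₀, y₀) ∈ ℂ²` is `(x(0), v(0))` for some solution.
The chain rule applies because `X_h` maps entire functions on `ℂ²` to entire functions.
-/

open Set

/-- `X_h` is `hamiltonLieDeriv φ'`. -/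
noncomputable def hamiltonLieDeriv (ψ : ℂ → ℂ) (f : ℂ × ℂ → ℂ) (p : ℂ × ℂ) : ℂ :=
  p.2 * deriv (fun s => f (s, p.2)) p.1 - ψ p.1 * deriv (fun s => f (p.1, s)) p.2

section PartialDeriv

variable {𝕜 E : Type*} [NontriviallyNormedField 𝕜] [NormedAddCommGroup E] [NormedSpace 𝕜 E]
  {f : 𝕜 × 𝕜 → E} {x y : 𝕜}

theorem deriv_comp_prodMk_left (hf : DifferentiableAt 𝕜 f (x, y)) :
    deriv (fun s => f (s, y)) x = fderiv 𝕜 f (x, y) (1, 0) :=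
  (hf.hasFDerivAt.comp_hasDerivAt x ((hasDerivAt_id x).prodMk (hasDerivAt_const x y))).deriv

theorem deriv_comp_prodMk_right (hf : DifferentiableAt 𝕜 f (x, y)) :
    deriv (fun s => f (x, s)) y = fderiv 𝕜 f (x, y) (0, 1) :=
  (hf.hasFDerivAt.comp_hasDerivAt y ((hasDerivAt_const y x).prodMk (hasDerivAt_id y))).deriv

end PartialDeriv

section HamiltonLieDeriv

variable {ψ : ℂ → ℂ} {f : ℂ × ℂ → ℂ}

theorem hamiltonLieDeriv_eq_fderiv {p : ℂ × ℂ} (hf : DifferentiableAt ℂ f p) :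
    hamiltonLieDeriv ψ f p = fderiv ℂ f p (p.2, -ψ p.1) := by
  obtain ⟨x, y⟩ := p
  have hsplit : (y, -ψ x) = y • ((1 : ℂ), (0 : ℂ)) - ψ x • ((0 : ℂ), (1 : ℂ)) := by
    ext <;> simp
  rw [hsplit, map_sub, map_smul, map_smul, smul_eq_mul, smul_eq_mul, hamiltonLieDeriv,
    deriv_comp_prodMk_left hf, deriv_comp_prodMk_right hf]

theorem AnalyticOnNhd.hamiltonLieDeriv (hf : AnalyticOnNhd ℂ f univ)
    (hψ : AnalyticOnNhd ℂ ψ univ) : AnalyticOnNhd ℂ (_root_.hamiltonLieDeriv ψ f) univ := by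
  have h : _root_.hamiltonLieDeriv ψ f = fun p => fderiv ℂ f p (p.2, -ψ p.1) :=
    funext fun p => hamiltonLieDeriv_eq_fderiv (hf p trivial).differentiableAt
  rw [h]
  intro p _
  have hfield : AnalyticAt ℂ (fun p : ℂ × ℂ => (p.2, -ψ p.1)) p :=
    analyticAt_snd.prod ((hψ p.1 trivial).comp analyticAt_fst).neg
  exact ((ContinuousLinearMap.apply ℂ ℂ).analyticAt_bilinear _).comp
    (hfield.prod (hf.fderiv p trivial))

theorem hasDerivAt_hamiltonLieDeriv {x v : ℝ → ℂ} {t : ℝ}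
    (hf : DifferentiableAt ℂ f (x t, v t)) (hx : HasDerivAt x (v t) t)
    (hv : HasDerivAt v (-ψ (x t)) t) :
    HasDerivAt (fun s => f (x s, v s)) (hamiltonLieDeriv ψ f (x t, v t)) t := by
  rw [hamiltonLieDeriv_eq_fderiv hf]
  exact (hf.hasFDerivAt.restrictScalars ℝ).comp_hasDerivAt t (hx.prodMk hv)

theorem iteratedDeriv_comp_eq_of_hamiltonLieDeriv {α : ℂ → ℂ} {A : ℕ → ℂ × ℂ → ℂ}
    (hA0 : ∀ x y, A 0 (x, y) = α x) (hA : ∀ n, A (n + 1) = hamiltonLieDeriv ψ (A n))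
    (hdiff : ∀ n, Differentiable ℂ (A n)) {I : Set ℝ} (hI : IsOpen I) {x v : ℝ → ℂ}
    (hx : ∀ t ∈ I, HasDerivAt x (v t) t) (hv : ∀ t ∈ I, HasDerivAt v (-ψ (x t)) t) (n : ℕ) :
    ∀ t ∈ I, iteratedDeriv n (fun s => α (x s)) t = A n (x t, v t) := by
  induction n with
  | zero => exact fun t _ => (hA0 _ _).symm
  | succ n ih =>
    intro t ht
    have heq : iteratedDeriv n (fun s => α (x s)) =ᶠ[nhds t] fun s => A n (x s, v s) :=
      Filter.eventually_of_mem (hI.mem_nhds ht) ih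
    rw [iteratedDeriv_succ, heq.deriv_eq, hA n]
    exact (hasDerivAt_hamiltonLieDeriv (hdiff n _) (hx t ht) (hv t ht)).deriv

end HamiltonLieDeriv

theorem exists_hasDerivAt_secondOrder {E : Type*} [NormedAddCommGroup E] [NormedSpace ℝ E]
    [CompleteSpace E] {ψ : E → E} {x₀ : E} (hψ : ContDiffAt ℝ 1 ψ x₀) (y₀ : E) (t₀ : ℝ) :
    ∃ ε > (0 : ℝ), ∃ x v : ℝ → E, x t₀ = x₀ ∧ v t₀ = y₀ ∧
      (∀ t ∈ Ioo (t₀ - ε) (t₀ + ε), HasDerivAt x (v t) t) ∧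
      (∀ t ∈ Ioo (t₀ - ε) (t₀ + ε), HasDerivAt v (-ψ (x t)) t) := by
  have hF : ContDiffAt ℝ 1 (fun p : E × E => (p.2, -ψ p.1)) (x₀, y₀) :=
    contDiffAt_snd.prodMk (hψ.comp _ contDiffAt_fst).neg
  obtain ⟨γ, hγ₀, ε, hε, hγ⟩ :=
    hF.exists_forall_mem_closedBall_exists_eq_forall_mem_Ioo_hasDerivAt₀ t₀
  refine ⟨ε, hε, fun t => (γ t).1, fun t => (γ t).2, by simp [hγ₀], by simp [hγ₀],
    fun t ht => ?_, fun t ht => ?_⟩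
  · exact (ContinuousLinearMap.fst ℝ E E).hasFDerivAt.comp_hasDerivAt t (hγ t ht)
  · exact (ContinuousLinearMap.snd ℝ E E).hasFDerivAt.comp_hasDerivAt t (hγ t ht)

/-- For entire `φ, α : ℂ → ℂ`, with `A n = X_h^n α` the iterated Lie
derivatives along `X_h = y ∂/∂x − φ'(x) ∂/∂y`, and `Q` a polynomial in `m+1` variables,
the following are equivalent:
(i) for every open real interval `I` and every solution `x : I → ℂ` of `x'' = −φ'(x)`,
the function `t ↦ Q(a(t), a'(t), …, a⁽ᵐ⁾(t))`, where `a(t) = α(x(t))`, vanishes on `I`;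
(ii) `(x,y) ↦ Q(A₀(x,y), …, A_m(x,y))` vanishes identically on `ℂ²`. -/
theorem statement2
    (φ α : ℂ → ℂ) (hφ : Differentiable ℂ φ) (hα : Differentiable ℂ α)
    (A : ℕ → ℂ × ℂ → ℂ)
    (hA0 : ∀ x y : ℂ, A 0 (x, y) = α x)
    (hArec : ∀ (n : ℕ) (x y : ℂ),
      A (n + 1) (x, y) =
        y * deriv (fun s => A n (s, y)) x - deriv φ x * deriv (fun s => A n (x, s)) y)
    (m : ℕ) (Q : MvPolynomial (Fin (m + 1)) ℂ) :
    (∀ I : Set ℝ, IsOpen I → I.OrdConnected →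
        ∀ x v : ℝ → ℂ,
          (∀ t ∈ I, HasDerivAt x (v t) t) →
          (∀ t ∈ I, HasDerivAt v (-(deriv φ (x t))) t) →
          ∀ t ∈ I,
            MvPolynomial.eval
              (fun i : Fin (m + 1) => iteratedDeriv (i : ℕ) (fun s => α (x s)) t) Q = 0)
      ↔ ∀ x y : ℂ,
          MvPolynomial.eval (fun i : Fin (m + 1) => A (i : ℕ) (x, y)) Q = 0 := by
  have hφ' : AnalyticOnNhd ℂ (deriv φ) univ :=
    (Complex.analyticOnNhd_univ_iff_differentiable.2 hφ).deriv
  have hLie : ∀ n, A (n + 1) = hamiltonLieDeriv (deriv φ) (A n) :=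
    fun n => funext fun p => hArec n p.1 p.2
  have hA : ∀ n, AnalyticOnNhd ℂ (A n) univ := by
    intro n
    induction n with
    | zero =>
      rw [show A 0 = fun p => α p.1 from funext fun p => hA0 p.1 p.2]
      exact fun p _ => (hα.analyticAt p.1).comp analyticAt_fst
    | succ n ih => exact hLie n ▸ ih.hamiltonLieDeriv hφ'
  have hjet : ∀ I, IsOpen I → ∀ x v : ℝ → ℂ, (∀ t ∈ I, HasDerivAt x (v t) t) →
      (∀ t ∈ I, HasDerivAt v (-(deriv φ (x t))) t) → ∀ t ∈ I,
      (fun i : Fin (m + 1) => iteratedDeriv i (fun s => α (x s)) t) =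
        fun i : Fin (m + 1) => A i (x t, v t) :=
    fun I hI x v hx hv t ht => funext fun i =>
      iteratedDeriv_comp_eq_of_hamiltonLieDeriv hA0 hLie
        (fun n p => (hA n p trivial).differentiableAt) hI hx hv i t ht
  constructor
  · intro h x₀ y₀
    obtain ⟨ε, hε, x, v, rfl, rfl, hx, hv⟩ :=
      exists_hasDerivAt_secondOrder ((hφ' x₀ trivial).contDiffAt.restrict_scalars ℝ) y₀ 0
    have h0 : (0 : ℝ) ∈ Ioo (0 - ε) (0 + ε) := ⟨by linarith, by linarith⟩
    rw [← hjet _ isOpen_Ioo x v hx hv 0 h0]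
    exact h _ isOpen_Ioo ordConnected_Ioo x v hx hv 0 h0
  · intro h I hI _ x v hx hv t ht
    rw [hjet I hI x v hx hv t ht]
    exact h _ _
end

section
/- Let φ, α : ℂ → ℂ be entire functions. For all integers n ≥ 1, the n-th iterated Lie derivative X_h^n α is a polynomial in y whose coefficients are the functions E_{n,k}(α,φ); that is, A_n(x,y) = Σ_{k=0}^{n} E_{n,k}(α,φ)(x) · yᵏ for all (x,y) ∈ ℂ², where E_{n,k} is defined by the recurrence E_{1,1} = α', E_{1,k} = 0 for k ≠ 1, and E_{n+1,k} = (E_{n,k−1})' − (k+1)·E_{n,k+1}·φ'. -/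
/-!
Write `A n (x, y) = ∑ₖ cₖ(x) yᵏ`. The field `y ∂ₓ − φ'(x) ∂_y` sends `cₖ(x) yᵏ` to
`cₖ'(x) yᵏ⁺¹ − k cₖ(x) φ'(x) yᵏ⁻¹`, so after shifting indices the coefficient of `yᵏ` in
`X_h A n` is `c'ₖ₋₁ − (k + 1) cₖ₊₁ φ'`, which is exactly the recurrence for `E`. The index shifts
are harmless because `E n k` vanishes for `k ∉ [0, n]`, and the termwise differentiation in `x` is
legitimate because each `E n k` is entire.
-/

open Finset

/-- The coefficients of `X_h (∑ₖ cₖ(x) yᵏ)` as a polynomial in `y`. -/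
noncomputable def lieDerivCoeff (φ : ℂ → ℂ) (c : ℤ → ℂ → ℂ) (k : ℤ) (x : ℂ) : ℂ :=
  deriv (c (k - 1)) x - ((k : ℂ) + 1) * c (k + 1) x * deriv φ x

def CoeffSupportedIn (c : ℤ → ℂ → ℂ) (n : ℕ) : Prop :=
  ∀ k : ℤ, k < 0 ∨ (n : ℤ) < k → c k = 0

section LieDerivCoeff

variable {φ : ℂ → ℂ} {c : ℤ → ℂ → ℂ} {n : ℕ}

theorem CoeffSupportedIn.lieDerivCoeff (hc : CoeffSupportedIn c n) :
    CoeffSupportedIn (lieDerivCoeff φ c) (n + 1) := by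
  intro k hk
  funext x
  have hprev : c (k - 1) = 0 := hc _ (by omega)
  have hnext : ((k : ℂ) + 1) * c (k + 1) x = 0 := by
    rcases eq_or_ne k (-1) with rfl | hk'
    · norm_num
    · rw [hc (k + 1) (by omega), Pi.zero_apply, mul_zero]
  simp [_root_.lieDerivCoeff, hprev, hnext]

theorem differentiable_lieDerivCoeff (hφ : Differentiable ℂ φ)
    (hc : ∀ k, Differentiable ℂ (c k)) (k : ℤ) :
    Differentiable ℂ (lieDerivCoeff φ c k) :=
  (hc (k - 1)).deriv.sub (((differentiable_const _).mul (hc (k + 1))).mul hφ.deriv)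

end LieDerivCoeff

theorem mul_sum_range_eq_sum_range_sub_one {b : ℤ → ℂ} (hb : b (-1) = 0) (n : ℕ) (y : ℂ) :
    y * ∑ k ∈ range (n + 1), b k * y ^ k = ∑ k ∈ range (n + 2), b (k - 1) * y ^ k := by
  rw [sum_range_succ' _ (n + 1), mul_sum]
  simp only [Nat.cast_zero, zero_sub, hb, zero_mul, add_zero, Nat.cast_succ, add_sub_cancel_right]
  exact sum_congr rfl fun k _ => by ring

theorem sum_range_mul_deriv_pow_eq {a : ℤ → ℂ} {n : ℕ} (ha : ∀ k : ℤ, n < k → a k = 0)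
    (y : ℂ) :
    ∑ k ∈ range (n + 1), a k * ((k : ℂ) * y ^ (k - 1)) =
      ∑ k ∈ range (n + 2), ((k : ℂ) + 1) * a (k + 1) * y ^ k := by
  rw [sum_range_succ' _ n, sum_range_succ _ (n + 1), sum_range_succ _ n]
  push_cast
  rw [ha (n + 1) (by omega), ha (n + 1 + 1) (by omega)]
  simp only [zero_mul, mul_zero, add_zero]
  exact sum_congr rfl fun k _ => by ring

theorem hasDerivAt_sum_coeff_mul_pow {c : ℤ → ℂ → ℂ} {x : ℂ}
    (hc : ∀ k, DifferentiableAt ℂ (c k) x) (n : ℕ) (y : ℂ) :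
    HasDerivAt (fun s => ∑ k ∈ range (n + 1), c k s * y ^ k)
      (∑ k ∈ range (n + 1), deriv (c k) x * y ^ k) x :=
  HasDerivAt.fun_sum fun k _ => (hc k).hasDerivAt.mul_const _

theorem hasDerivAt_sum_mul_pow (a : ℤ → ℂ) (n : ℕ) (y : ℂ) :
    HasDerivAt (fun s => ∑ k ∈ range (n + 1), a k * s ^ k)
      (∑ k ∈ range (n + 1), a k * ((k : ℂ) * y ^ (k - 1))) y :=
  HasDerivAt.fun_sum fun k _ => (hasDerivAt_pow k y).const_mul _

theorem hamiltonian_sum_coeff_mul_pow {φ : ℂ → ℂ} {c : ℤ → ℂ → ℂ} {n : ℕ}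
    (hdiff : ∀ k, Differentiable ℂ (c k)) (hsupp : CoeffSupportedIn c n) (x y : ℂ) :
    y * deriv (fun s => ∑ k ∈ range (n + 1), c k s * y ^ k) x
        - deriv φ x * deriv (fun s => ∑ k ∈ range (n + 1), c k x * s ^ k) y =
      ∑ k ∈ range (n + 2), lieDerivCoeff φ c k x * y ^ k := by
  have hlow : deriv (c (-1)) x = 0 := by simp [hsupp (-1) (by omega)]
  have hhigh : ∀ j : ℤ, n < j → c j x = 0 := fun j hj => by simp [hsupp j (Or.inr hj)]
  rw [(hasDerivAt_sum_coeff_mul_pow (fun k => (hdiff k).differentiableAt) n y).deriv,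
    (hasDerivAt_sum_mul_pow (fun k => c k x) n y).deriv,
    mul_sum_range_eq_sum_range_sub_one (b := fun k => deriv (c k) x) hlow,
    sum_range_mul_deriv_pow_eq (a := fun k => c k x) hhigh,
    mul_sum, ← sum_sub_distrib]
  exact sum_congr rfl fun k _ => by rw [lieDerivCoeff]; push_cast; ring

section Coefficients

variable {φ : ℂ → ℂ} {E : ℕ → ℤ → ℂ → ℂ}

theorem coeffSupportedIn_of_lieDerivCoeff_succ
    (hstep : ∀ n, 1 ≤ n → E (n + 1) = lieDerivCoeff φ (E n)) (h₁ : CoeffSupportedIn (E 1) 1) :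
    ∀ n, 1 ≤ n → CoeffSupportedIn (E n) n := by
  intro n hn
  induction n, hn using Nat.le_induction with
  | base => exact h₁
  | succ n hn ih => rw [hstep n hn]; exact ih.lieDerivCoeff

theorem differentiable_of_lieDerivCoeff_succ (hφ : Differentiable ℂ φ)
    (hstep : ∀ n, 1 ≤ n → E (n + 1) = lieDerivCoeff φ (E n))
    (h₁ : ∀ k, Differentiable ℂ (E 1 k)) :
    ∀ n, 1 ≤ n → ∀ k, Differentiable ℂ (E n k) := by
  intro n hn
  induction n, hn using Nat.le_induction with
  | base => exact h₁
  | succ n hn ih => rw [hstep n hn]; exact differentiable_lieDerivCoeff hφ ih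

end Coefficients

/-- For entire `φ, α : ℂ → ℂ`, the `n`-th iterated Lie derivative
`A n = X_h^n α` (with `X_h = y ∂/∂x − φ'(x) ∂/∂y`) is a polynomial in `y` whose
coefficients are the functions `E n k` defined by the recurrence `E 1 1 = α'`,
`E 1 k = 0` for `k ≠ 1`, and `E (n+1) k = (E n (k−1))' − (k+1) ⬝ E n (k+1) ⬝ φ'`:
for all `n ≥ 1`, `A n (x,y) = Σ_{k=0}^{n} E n k x * y^k`. -/
theorem statement4
    (φ α : ℂ → ℂ) (hφ : Differentiable ℂ φ) (hα : Differentiable ℂ α)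
    (A : ℕ → ℂ × ℂ → ℂ)
    (hA0 : ∀ x y : ℂ, A 0 (x, y) = α x)
    (hArec : ∀ (n : ℕ) (x y : ℂ),
      A (n + 1) (x, y) =
        y * deriv (fun s => A n (s, y)) x - deriv φ x * deriv (fun s => A n (x, s)) y)
    (E : ℕ → ℤ → ℂ → ℂ)
    (hE11 : ∀ x : ℂ, E 1 1 x = deriv α x)
    (hE1k : ∀ k : ℤ, k ≠ 1 → ∀ x : ℂ, E 1 k x = 0)
    (hErec : ∀ n : ℕ, 1 ≤ n → ∀ (k : ℤ) (x : ℂ),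
      E (n + 1) k x = deriv (E n (k - 1)) x - ((k : ℂ) + 1) * E n (k + 1) x * deriv φ x) :
    ∀ n : ℕ, 1 ≤ n → ∀ x y : ℂ,
      A n (x, y) = ∑ k ∈ Finset.range (n + 1), E n (k : ℤ) x * y ^ k := by
  have hstep : ∀ n, 1 ≤ n → E (n + 1) = lieDerivCoeff φ (E n) := fun n hn =>
    funext fun k => funext (hErec n hn k)
  have hsupp : ∀ n, 1 ≤ n → CoeffSupportedIn (E n) n :=
    coeffSupportedIn_of_lieDerivCoeff_succ hstep fun k hk => funext (hE1k k (by omega))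
  have hdiff : ∀ n, 1 ≤ n → ∀ k, Differentiable ℂ (E n k) := by
    refine differentiable_of_lieDerivCoeff_succ hφ hstep fun k => ?_
    rcases eq_or_ne k 1 with rfl | hk
    · rw [funext hE11]; exact hα.deriv
    · rw [funext (hE1k k hk)]; exact differentiable_const 0
  intro n hn
  induction n, hn using Nat.le_induction with
  | base =>
    intro x y
    simp [hArec 0 x y, hA0, sum_range_succ, hE11, hE1k 0 zero_ne_one, mul_comm]
  | succ n hn ih =>
    intro x y
    simp only [hArec n x y, ih, hstep n hn]
    exact hamiltonian_sum_coeff_mul_pow (hdiff n hn) (hsupp n hn) x y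
end

section
/- Let b, c, e ∈ ℂ with e ≠ 0, and let N₁(x) = x(4ec²x⁵ − 42becx⁴ − (6c³ + 48eb²)x³ + 9b²cx + 6b³), N₂(x) = x(8ecx⁵ − 12bcex⁴ − (24eb² + 12c³)x³ − 12bc²x² + 3b³), N₃(x) = 8c²e²x⁶ − 84bce²x⁵ − (12c³e + 168b²e²)x⁴ + 21b³ex − 3b²c². Then the Wronskian W(N₁,N₂,N₃) vanishes identically as a function of x ∈ ℂ if and only if b = 0 or c = 0. -/
/-!
At `x = 0` the Wronskian only sees the coefficients of `1, x, x²` of `N₁, N₂, N₃`, and there it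
equals `162 b⁷ c³`; hence it vanishes identically only if `b = 0` or `c = 0`. Conversely
`N₃ = 2e N₁` when `b = 0` and `N₁ = 2 N₂` when `c = 0`, so the Wronskian has two proportional
columns.
-/

noncomputable def wronskian3 (f g h : ℂ → ℂ) (x : ℂ) : ℂ :=
  Matrix.det
    !![f x, g x, h x;
       deriv f x, deriv g x, deriv h x;
       deriv (deriv f) x, deriv (deriv g) x, deriv (deriv h) x]

open Polynomial

section Wronskian

variable {f g h : ℂ → ℂ} {a : ℂ}

theorem wronskian3_eq_zero_of_left_eq_const_mul (hf : ∀ x, f x = a * g x) (x : ℂ) :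
    wronskian3 f g h x = 0 := by
  obtain rfl : f = fun x => a * g x := funext hf
  simp [wronskian3, deriv_const_mul_field', Matrix.det_fin_three]
  ring

theorem wronskian3_eq_zero_of_right_eq_const_mul (hh : ∀ x, h x = a * f x) (x : ℂ) :
    wronskian3 f g h x = 0 := by
  obtain rfl : h = fun x => a * f x := funext hh
  simp [wronskian3, deriv_const_mul_field', Matrix.det_fin_three]
  ring

end Wronskian

theorem deriv_deriv_polynomial_eval {𝕜 : Type*} [NontriviallyNormedField 𝕜] (p : 𝕜[X]) :
    deriv (deriv fun x => p.eval x) = fun x => (derivative (derivative p)).eval x := by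
  have hderiv : deriv (fun x => p.eval x) = fun x => (derivative p).eval x :=
    funext fun x => Polynomial.deriv p
  exact hderiv ▸ funext fun x => Polynomial.deriv _

theorem wronskian3_polynomial_eval_zero (p q r : ℂ[X]) :
    wronskian3 (fun x => p.eval x) (fun x => q.eval x) (fun x => r.eval x) 0 =
      Matrix.det !![p.coeff 0, q.coeff 0, r.coeff 0;
        p.coeff 1, q.coeff 1, r.coeff 1;
        p.coeff 2 * 2, q.coeff 2 * 2, r.coeff 2 * 2] := by
  simp only [wronskian3, deriv_deriv_polynomial_eval, Polynomial.deriv, ← coeff_zero_eq_eval_zero,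
    coeff_derivative]
  norm_num

noncomputable def polyN₁ (b c e : ℂ) : ℂ[X] :=
  C (4 * e * c ^ 2) * X ^ 6 - C (42 * b * e * c) * X ^ 5 - C (6 * c ^ 3 + 48 * e * b ^ 2) * X ^ 4
    + C (9 * b ^ 2 * c) * X ^ 2 + C (6 * b ^ 3) * X

noncomputable def polyN₂ (b c e : ℂ) : ℂ[X] :=
  C (8 * e * c) * X ^ 6 - C (12 * b * c * e) * X ^ 5 - C (24 * e * b ^ 2 + 12 * c ^ 3) * X ^ 4
    - C (12 * b * c ^ 2) * X ^ 3 + C (3 * b ^ 3) * X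

noncomputable def polyN₃ (b c e : ℂ) : ℂ[X] :=
  C (8 * c ^ 2 * e ^ 2) * X ^ 6 - C (84 * b * c * e ^ 2) * X ^ 5
    - C (12 * c ^ 3 * e + 168 * b ^ 2 * e ^ 2) * X ^ 4 + C (21 * b ^ 3 * e) * X - C (3 * b ^ 2 * c ^ 2)

theorem wronskian3_polyN_eval_zero (b c e : ℂ) :
    wronskian3 (fun x => (polyN₁ b c e).eval x) (fun x => (polyN₂ b c e).eval x)
      (fun x => (polyN₃ b c e).eval x) 0 = 162 * b ^ 7 * c ^ 3 := by
  rw [wronskian3_polynomial_eval_zero, Matrix.det_fin_three]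
  simp only [Matrix.of_apply, Matrix.cons_val', Matrix.cons_val_zero, Matrix.cons_val_one,
    Matrix.cons_val_two, Matrix.empty_val', Matrix.cons_val_fin_one, Matrix.head_cons,
    Matrix.tail_cons]
  simp only [polyN₁, polyN₂, polyN₃, coeff_add, coeff_sub, coeff_C_mul, coeff_X_pow, coeff_X,
    coeff_C]
  norm_num
  ring

theorem statement10_general
    (b c e : ℂ)
    (N₁ N₂ N₃ : ℂ → ℂ)
    (hN₁ : ∀ x : ℂ, N₁ x = x * (4 * e * c ^ 2 * x ^ 5 - 42 * b * e * c * x ^ 4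
      - (6 * c ^ 3 + 48 * e * b ^ 2) * x ^ 3 + 9 * b ^ 2 * c * x + 6 * b ^ 3))
    (hN₂ : ∀ x : ℂ, N₂ x = x * (8 * e * c * x ^ 5 - 12 * b * c * e * x ^ 4
      - (24 * e * b ^ 2 + 12 * c ^ 3) * x ^ 3 - 12 * b * c ^ 2 * x ^ 2 + 3 * b ^ 3))
    (hN₃ : ∀ x : ℂ, N₃ x = 8 * c ^ 2 * e ^ 2 * x ^ 6 - 84 * b * c * e ^ 2 * x ^ 5
      - (12 * c ^ 3 * e + 168 * b ^ 2 * e ^ 2) * x ^ 4 + 21 * b ^ 3 * e * x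
      - 3 * b ^ 2 * c ^ 2) :
    (∀ x : ℂ, wronskian3 N₁ N₂ N₃ x = 0) ↔ (b = 0 ∨ c = 0) := by
  constructor
  · intro hW
    have hN₁_eval : N₁ = fun x => (polyN₁ b c e).eval x :=
      funext fun x => by rw [hN₁]; simp [polyN₁]; ring
    have hN₂_eval : N₂ = fun x => (polyN₂ b c e).eval x :=
      funext fun x => by rw [hN₂]; simp [polyN₂]; ring
    have hN₃_eval : N₃ = fun x => (polyN₃ b c e).eval x :=
      funext fun x => by rw [hN₃]; simp [polyN₃]
    have h0 := hW 0
    rw [hN₁_eval, hN₂_eval, hN₃_eval, wronskian3_polyN_eval_zero] at h0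
    simpa using h0
  · rintro (rfl | rfl)
    · exact wronskian3_eq_zero_of_right_eq_const_mul (a := 2 * e) fun x => by rw [hN₃, hN₁]; ring
    · exact wronskian3_eq_zero_of_left_eq_const_mul (a := 2) fun x => by rw [hN₁, hN₂]; ring

/-- For `e ≠ 0` and the explicit polynomials `N₁, N₂, N₃` below,
the Wronskian `W(N₁,N₂,N₃)` vanishes identically iff `b = 0` or `c = 0`. -/
theorem statement10
    (b c e : ℂ) (he : e ≠ 0)
    (N₁ N₂ N₃ : ℂ → ℂ)
    (hN₁ : ∀ x : ℂ, N₁ x = x * (4 * e * c ^ 2 * x ^ 5 - 42 * b * e * c * x ^ 4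
      - (6 * c ^ 3 + 48 * e * b ^ 2) * x ^ 3 + 9 * b ^ 2 * c * x + 6 * b ^ 3))
    (hN₂ : ∀ x : ℂ, N₂ x = x * (8 * e * c * x ^ 5 - 12 * b * c * e * x ^ 4
      - (24 * e * b ^ 2 + 12 * c ^ 3) * x ^ 3 - 12 * b * c ^ 2 * x ^ 2 + 3 * b ^ 3))
    (hN₃ : ∀ x : ℂ, N₃ x = 8 * c ^ 2 * e ^ 2 * x ^ 6 - 84 * b * c * e ^ 2 * x ^ 5
      - (12 * c ^ 3 * e + 168 * b ^ 2 * e ^ 2) * x ^ 4 + 21 * b ^ 3 * e * x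
      - 3 * b ^ 2 * c ^ 2) :
    (∀ x : ℂ, wronskian3 N₁ N₂ N₃ x = 0) ↔ (b = 0 ∨ c = 0) :=
  statement10_general b c e N₁ N₂ N₃ hN₁ hN₂ hN₃
end

section
/- Let b, e ∈ ℂ with e ≠ 0, and let N₄,₁(x) = x(b − 8ex³), N₄,₂(x) = x²(b − 2ex³), N₄,₃(x) = b² − 28ebx³ + 16e²x⁶. Then the Wronskian W(N₄,₁, N₄,₂, N₄,₃) is a polynomial in x of degree 12 whose coefficient of x¹² equals 512e⁴; in particular, it does not vanish identically for any value of b. -/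
open Polynomial


/-- For `e ≠ 0`, with `N₄,₁(x) = x(b − 8ex³)`,
`N₄,₂(x) = x²(b − 2ex³)`, `N₄,₃(x) = b² − 28ebx³ + 16e²x⁶`, the Wronskian
`W(N₄,₁,N₄,₂,N₄,₃)` is a polynomial in `x` of degree `12` whose coefficient of
`x¹²` is `512e⁴`; in particular it does not vanish identically for any `b`. -/
theorem statement14
    (b e : ℂ) (he : e ≠ 0)
    (N₄₁ N₄₂ N₄₃ : ℂ → ℂ)
    (hN₄₁ : ∀ x : ℂ, N₄₁ x = x * (b - 8 * e * x ^ 3))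
    (hN₄₂ : ∀ x : ℂ, N₄₂ x = x ^ 2 * (b - 2 * e * x ^ 3))
    (hN₄₃ : ∀ x : ℂ, N₄₃ x = b ^ 2 - 28 * e * b * x ^ 3 + 16 * e ^ 2 * x ^ 6) :
    (∃ P : Polynomial ℂ,
        (∀ x : ℂ, wronskian3 N₄₁ N₄₂ N₄₃ x = P.eval x) ∧
        P.degree = 12 ∧ P.coeff 12 = 512 * e ^ 4) ∧
      ∃ x : ℂ, wronskian3 N₄₁ N₄₂ N₄₃ x ≠ 0 := by
  set p : ℂ[X] := C b * X - C (8*e) * X^4 with hp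
  set q : ℂ[X] := C b * X^2 - C (2*e) * X^5 with hq
  set r : ℂ[X] := C (b^2) - C (28*e*b) * X^3 + C (16*e^2) * X^6 with hr
  have hf : N₄₁ = fun x => p.eval x := by
    funext x; simp only [hN₄₁, hp, eval_add, eval_sub, eval_mul, eval_pow, eval_C, eval_X]; try ring
  have hg : N₄₂ = fun x => q.eval x := by
    funext x; simp only [hN₄₂, hq, eval_add, eval_sub, eval_mul, eval_pow, eval_C, eval_X]; try ring
  have hh : N₄₃ = fun x => r.eval x := by
    funext x; simp only [hN₄₃, hr, eval_add, eval_sub, eval_mul, eval_pow, eval_C, eval_X]; try ring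
  have dstep : ∀ s : ℂ[X], (deriv fun x => s.eval x) = fun x => s.derivative.eval x := by
    intro s; funext x; apply Polynomial.deriv
  have hf1 : deriv N₄₁ = fun x => p.derivative.eval x := by rw [hf, dstep]
  have hg1 : deriv N₄₂ = fun x => q.derivative.eval x := by rw [hg, dstep]
  have hh1 : deriv N₄₃ = fun x => r.derivative.eval x := by rw [hh, dstep]
  have hf2 : deriv (deriv N₄₁) = fun x => p.derivative.derivative.eval x := by rw [hf1, dstep]
  have hg2 : deriv (deriv N₄₂) = fun x => q.derivative.derivative.eval x := by rw [hg1, dstep]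
  have hh2 : deriv (deriv N₄₃) = fun x => r.derivative.derivative.eval x := by rw [hh1, dstep]
  have key : ∀ x : ℂ, wronskian3 N₄₁ N₄₂ N₄₃ x =
      2*b^4 + 32*b^3*e*x^3 + 192*b^2*e^2*x^6 + 512*b*e^3*x^9 + 512*e^4*x^12 := by
    intro x
    simp only [wronskian3]
    rw [hf2, hg2, hh2, hf1, hg1, hh1, hf, hg, hh]
    simp [Matrix.det_fin_three, hp, hq, hr, derivative_pow]
    try ring
  set P : ℂ[X] := C (2*b^4) + C (32*b^3*e) * X^3 + C (192*b^2*e^2) * X^6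
      + C (512*b*e^3) * X^9 + C (512*e^4) * X^12 with hP
  have heval : ∀ x : ℂ, wronskian3 N₄₁ N₄₂ N₄₃ x = P.eval x := by
    intro x
    rw [key, hP]
    simp only [eval_add, eval_mul, eval_pow, eval_C, eval_X]
  have hc12 : P.coeff 12 = 512 * e ^ 4 := by
    rw [hP]
    simp only [coeff_add, coeff_C_mul, coeff_X_pow, Polynomial.coeff_C]
    norm_num
  have hlead : (512 : ℂ) * e ^ 4 ≠ 0 := mul_ne_zero (by norm_num) (pow_ne_zero _ he)
  have hdeg : P.degree = 12 := by
    rw [hP]; compute_degree!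
  have hPne : P ≠ 0 := fun h => by simp [h] at hdeg
  have hcard : P.natDegree < Cardinal.mk ℂ := by
    exact lt_of_lt_of_le (Cardinal.nat_lt_aleph0 _) (Cardinal.aleph0_le_mk ℂ)
  obtain ⟨x, hx⟩ := P.exists_eval_ne_zero_of_natDegree_lt_card hPne hcard
  exact ⟨⟨P, heval, hdeg, hc12⟩, ⟨x, by rw [heval]; exact hx⟩⟩
end

section
/- Let c, e ∈ ℂ with c ≠ 0 and e ≠ 0, let D₃(x) = 2ex² + c, and let N₃,₁(x) = 6ex² − c, N₃,₂(x) = x(−3c + 2ex²), N₃,₃(x) = (c³ + 6ec²x² + 16e³x⁶)·x⁻³. Suppose K₁, K₂, K₃ ∈ ℂ are such that the function y = (K₁N₃,₁ + K₂N₃,₂ + K₃N₃,₃)/D₃³ satisfies the nonlinear equation (NL3): 72exy² + (2cx + 4ex³)(y')² + (14c + 84ex²)yy' + (2cx + 4ex³)yy'' = 0 at every point of some nonempty open subset U ⊆ ℂ on which x ≠ 0 and D₃ does not vanish. Then K₁ = K₂ = K₃ = 0. -/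
/-!
Write `a = x D₃ = 2ex³ + cx` and `p = x³ (K₁N₃,₁ + K₂N₃,₂ + K₃N₃,₃)`, so that `y = p / a³`.
The left side of (NL3) is `2 (3a'' y² + a y'² + 7a' y y' + a y y'')`, and after the substitution
it equals `a² (a W'' - 5a' W') / a⁸` with `W = p²`. Hence `a W'' = 5 a' W'` on `U`, and so as
polynomials. Comparing leading coefficients, a nonconstant `W` would have `deg W' = 5 deg a = 15`,
while `deg W ≤ 12`; so `p` is constant, and its coefficients of `x³, x⁴, x²` are `-cK₁, -3cK₂, 6c²eK₃`.
-/

open Polynomial Set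

theorem natDegree_eq_of_mul_derivative_eq {K : Type*} [Field K] [CharZero K] {A V : K[X]}
    {k : K} (hA : A ≠ 0) (hV : V ≠ 0) (h : A * derivative V = C k * derivative A * V) :
    (V.natDegree : K) = k * A.natDegree := by
  have hlead := congrArg leadingCoeff h
  simp only [leadingCoeff_mul, leadingCoeff_derivative, leadingCoeff_C] at hlead
  apply mul_left_cancel₀ (mul_ne_zero (leadingCoeff_ne_zero.mpr hA) (leadingCoeff_ne_zero.mpr hV))
  linear_combination hlead

theorem natDegree_eq_zero_of_mul_derivative_derivative_eq {K : Type*} [Field K] [CharZero K]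
    {A W : K[X]} {k : ℕ} (hA : A ≠ 0) (hW : W.natDegree ≤ k * A.natDegree)
    (h : A * derivative (derivative W) = C (k : K) * derivative A * derivative W) :
    W.natDegree = 0 := by
  by_contra hW0
  have hdeg : ((derivative W).natDegree : K) = k * A.natDegree :=
    natDegree_eq_of_mul_derivative_eq hA (derivative_ne_zero.mpr hW0) h
  have := natDegree_derivative_le W
  norm_cast at hdeg
  omega

section Calculus

variable {𝕜 : Type*} [NontriviallyNormedField 𝕜]

theorem hasDerivAt_eval_div_pow (p a : 𝕜[X]) (n : ℕ) {z : 𝕜} (hz : a.eval z ≠ 0) :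
    HasDerivAt (fun w => p.eval w / a.eval w ^ n)
      ((derivative p * a - n * p * derivative a).eval z / a.eval z ^ (n + 1)) z := by
  refine ((p.hasDerivAt z).fun_div ((a.hasDerivAt z).fun_pow n) (pow_ne_zero n hz)).congr_deriv ?_
  rcases n with _ | n
  · simp [mul_div_cancel_right₀ _ hz]
  · simp only [eval_sub, eval_mul, eval_natCast, Nat.add_sub_cancel]
    field_simp
    ring

variable {p a : 𝕜[X]} {y : 𝕜 → 𝕜} {U : Set 𝕜}

theorem eqOn_deriv_of_eqOn_eval_div_pow {n : ℕ} (hU : IsOpen U) (ha : ∀ w ∈ U, a.eval w ≠ 0)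
    (hy : EqOn y (fun w => p.eval w / a.eval w ^ n) U) :
    EqOn (deriv y)
      (fun w => (derivative p * a - n * p * derivative a).eval w / a.eval w ^ (n + 1)) U :=
  fun w hw => ((hasDerivAt_eval_div_pow p a n (ha w hw)).congr_of_eventuallyEq
    (hy.eventuallyEq_of_mem (hU.mem_nhds hw))).deriv

/-- Substituting `y = p / a³` turns the nonlinear equation into the linear equation
`a W'' = 5 a' W'` for `W = p²`. -/
theorem eval_mul_derivative_sq_eq (hU : IsOpen U) (ha : ∀ w ∈ U, a.eval w ≠ 0)
    (hy : EqOn y (fun w => p.eval w / a.eval w ^ 3) U) {z : 𝕜} (hz : z ∈ U)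
    (h : 3 * (derivative (derivative a)).eval z * y z ^ 2 + a.eval z * deriv y z ^ 2
      + 7 * (derivative a).eval z * y z * deriv y z + a.eval z * y z * iteratedDeriv 2 y z = 0) :
    (a * derivative (derivative (p ^ 2))).eval z
      = (C 5 * derivative a * derivative (p ^ 2)).eval z := by
  have hy' := eqOn_deriv_of_eqOn_eval_div_pow hU ha hy
  have hy'' := eqOn_deriv_of_eqOn_eval_div_pow hU ha hy'
  rw [iteratedDeriv_succ, iteratedDeriv_one, hy hz, hy' hz, hy'' hz] at h
  have haz := ha z hz
  have key : ((a * derivative (derivative (p ^ 2))).eval z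
      - (C 5 * derivative a * derivative (p ^ 2)).eval z) * a.eval z ^ 2
      = 2 * a.eval z ^ 8 * 0 := by
    rw [← h]
    push_cast
    simp only [derivative_mul, derivative_sub, derivative_sq, derivative_ofNat, map_ofNat,
      eval_mul, eval_sub, eval_add, eval_ofNat, eval_zero]
    field_simp
    ring
  rw [mul_zero, mul_eq_zero, sub_eq_zero] at key
  exact key.resolve_right (pow_ne_zero 2 haz)

end Calculus

noncomputable def xD₃ (c e : ℂ) : ℂ[X] := X * (C (2 * e) * X ^ 2 + C c)

noncomputable def numeratorN₃ (c e K₁ K₂ K₃ : ℂ) : ℂ[X] :=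
  C (c ^ 3 * K₃) + C (6 * c ^ 2 * e * K₃) * X ^ 2 - C (c * K₁) * X ^ 3 - C (3 * c * K₂) * X ^ 4
    + C (6 * e * K₁) * X ^ 5 + C (2 * e * K₂ + 16 * e ^ 3 * K₃) * X ^ 6

section NL3

variable {c e : ℂ} (K₁ K₂ K₃ : ℂ)

theorem natDegree_xD₃ (he : e ≠ 0) : (xD₃ c e).natDegree = 3 := by
  unfold xD₃
  compute_degree!

theorem natDegree_numeratorN₃_le : (numeratorN₃ c e K₁ K₂ K₃).natDegree ≤ 6 := by
  unfold numeratorN₃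
  compute_degree

theorem eval_xD₃ (x : ℂ) : (xD₃ c e).eval x = x * (2 * e * x ^ 2 + c) := by
  simp [xD₃]

theorem eval_derivative_xD₃ (x : ℂ) : (derivative (xD₃ c e)).eval x = 6 * e * x ^ 2 + c := by
  simp [xD₃]
  ring

theorem eval_derivative_derivative_xD₃ (x : ℂ) :
    (derivative (derivative (xD₃ c e))).eval x = 12 * e * x := by
  simp [xD₃]
  ring

theorem eval_numeratorN₃_div_eval_xD₃_pow {x : ℂ} (hx : x ≠ 0) :
    (numeratorN₃ c e K₁ K₂ K₃).eval x / (xD₃ c e).eval x ^ 3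
      = (K₁ * (6 * e * x ^ 2 - c) + K₂ * (x * (-3 * c + 2 * e * x ^ 2))
        + K₃ * ((c ^ 3 + 6 * e * c ^ 2 * x ^ 2 + 16 * e ^ 3 * x ^ 6) / x ^ 3))
        / (2 * e * x ^ 2 + c) ^ 3 := by
  rw [eval_xD₃]
  simp only [numeratorN₃, eval_add, eval_sub, eval_mul, eval_pow, eval_C, eval_X]
  field_simp
  ring

theorem eq_zero_of_natDegree_numeratorN₃_eq_zero (hc : c ≠ 0) (he : e ≠ 0)
    (h : (numeratorN₃ c e K₁ K₂ K₃).natDegree = 0) : K₁ = 0 ∧ K₂ = 0 ∧ K₃ = 0 := by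
  have hcoeff : ∀ k, 0 < k → (numeratorN₃ c e K₁ K₂ K₃).coeff k = 0 :=
    fun k hk => coeff_eq_zero_of_natDegree_lt (h ▸ hk)
  have h2 := hcoeff 2 (by norm_num)
  have h3 := hcoeff 3 (by norm_num)
  have h4 := hcoeff 4 (by norm_num)
  simp only [numeratorN₃, coeff_add, coeff_sub, coeff_C_mul, coeff_X_pow, coeff_C] at h2 h3 h4
  norm_num [hc, he] at h2 h3 h4
  exact ⟨h3, h4, h2⟩

end NL3

/-- Let `c, e` be nonzero, `D₃(x) = 2ex² + c`, and let
`N₃,₁, N₃,₂, N₃,₃` be the explicit solutions of (L3). If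
`y = (K₁N₃,₁ + K₂N₃,₂ + K₃N₃,₃)/D₃³` satisfies the nonlinear equation (NL3):
`72exy² + (2cx+4ex³)(y')² + (14c+84ex²)yy' + (2cx+4ex³)yy'' = 0`
on some nonempty open set `U` on which `x ≠ 0` and `D₃` does not vanish,
then `K₁ = K₂ = K₃ = 0`. -/
theorem statement16
    (c e : ℂ) (hc : c ≠ 0) (he : e ≠ 0)
    (D₃ N₃₁ N₃₂ N₃₃ : ℂ → ℂ)
    (hD₃ : ∀ x : ℂ, D₃ x = 2 * e * x ^ 2 + c)
    (hN₃₁ : ∀ x : ℂ, N₃₁ x = 6 * e * x ^ 2 - c)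
    (hN₃₂ : ∀ x : ℂ, N₃₂ x = x * (-3 * c + 2 * e * x ^ 2))
    (hN₃₃ : ∀ x : ℂ, N₃₃ x = (c ^ 3 + 6 * e * c ^ 2 * x ^ 2 + 16 * e ^ 3 * x ^ 6) / x ^ 3)
    (K₁ K₂ K₃ : ℂ)
    (y : ℂ → ℂ)
    (hy : ∀ x : ℂ, y x = (K₁ * N₃₁ x + K₂ * N₃₂ x + K₃ * N₃₃ x) / D₃ x ^ 3)
    (U : Set ℂ) (hU : IsOpen U) (hUne : U.Nonempty)
    (hx0 : ∀ x ∈ U, x ≠ 0)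
    (hDU : ∀ x ∈ U, D₃ x ≠ 0)
    (hNL3 : ∀ x ∈ U,
      72 * e * x * (y x) ^ 2
        + (2 * c * x + 4 * e * x ^ 3) * (deriv y x) ^ 2
        + (14 * c + 84 * e * x ^ 2) * y x * deriv y x
        + (2 * c * x + 4 * e * x ^ 3) * y x * iteratedDeriv 2 y x = 0) :
    K₁ = 0 ∧ K₂ = 0 ∧ K₃ = 0 := by
  set a := xD₃ c e
  set p := numeratorN₃ c e K₁ K₂ K₃
  have ha : ∀ w ∈ U, a.eval w ≠ 0 := fun w hw => by
    simpa [a, eval_xD₃, hD₃] using mul_ne_zero (hx0 w hw) (hDU w hw)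
  have hyU : EqOn y (fun w => p.eval w / a.eval w ^ 3) U := fun w hw => by
    rw [hy, hN₃₁, hN₃₂, hN₃₃, hD₃, ← eval_numeratorN₃_div_eval_xD₃_pow K₁ K₂ K₃ (hx0 w hw)]
  have hWU : ∀ z ∈ U, (a * derivative (derivative (p ^ 2))).eval z
      = (C 5 * derivative a * derivative (p ^ 2)).eval z := fun z hz =>
    eval_mul_derivative_sq_eq hU ha hyU hz (by
      rw [eval_xD₃, eval_derivative_xD₃, eval_derivative_derivative_xD₃]
      linear_combination hNL3 z hz / 2)
  have hUinf : U.Infinite := by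
    obtain ⟨x, hx⟩ := hUne
    exact infinite_of_mem_nhds x (hU.mem_nhds hx)
  have hW : a * derivative (derivative (p ^ 2))
      = C ((5 : ℕ) : ℂ) * derivative a * derivative (p ^ 2) := by
    exact_mod_cast eq_of_infinite_eval_eq _ _ (hUinf.mono hWU)
  have hp2 : (p ^ 2).natDegree = 0 := by
    have := natDegree_pow_le (p := p) (n := 2)
    have : p.natDegree ≤ 6 := natDegree_numeratorN₃_le K₁ K₂ K₃
    have : a.natDegree = 3 := natDegree_xD₃ he
    exact natDegree_eq_zero_of_mul_derivative_derivative_eq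
      (ne_zero_of_natDegree_gt (n := 0) (by omega)) (by omega) hW
  rw [natDegree_pow, mul_eq_zero, or_iff_right two_ne_zero] at hp2
  exact eq_zero_of_natDegree_numeratorN₃_eq_zero K₁ K₂ K₃ hc he hp2
end

section
/- Let b, e ∈ ℂ with e ≠ 0, let D₄(x) = 4ex³ + b, and let N₄,₁(x) = x(b − 8ex³), N₄,₂(x) = x²(b − 2ex³), N₄,₃(x) = b² − 28ebx³ + 16e²x⁶. Suppose K₁, K₂, K₃ ∈ ℂ are such that the function y = (K₁N₄,₁ + K₂N₄,₂ + K₃N₄,₃)/D₄³ satisfies the nonlinear equation (NL4): 72exy² + (b + 4ex³)(y')² + 84ex²yy' + (b + 4ex³)yy'' = 0 at every point of some nonempty open subset U ⊆ ℂ on which D₄ does not vanish. Then K₁ = K₂ = K₃ = 0. -/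
/-!
Write `y = P / D³` with `P = K₁N₄,₁ + K₂N₄,₂ + K₃N₄,₃` and `D = D₄`. The quotient rule gives
`y' = Q / D⁴` and `y'' = R / D⁵` for polynomials `Q, R`, so `D⁷` times the left side of (NL4) is a
polynomial `W(P)` vanishing on the infinite set `U`; hence `W(P) = 0`. If `P` has degree `M ≥ 1`
and leading coefficient `p`, then `W(P)` has degree at most `2M + 4` with coefficient
`32 M (M - 8) e² p²` there. As `deg P ≤ 6`, `P` is constant, so its coefficients of `x⁴, x⁵, x⁶`,
namely `-8eK₁, -2eK₂, 16e²K₃`, vanish.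
-/

open Polynomial

section TopCoeff

variable {R : Type*} [CommRing R] {P Q : R[X]} {m n : ℕ} {a c : R}

def HasTopCoeff (P : R[X]) (n : ℕ) (c : R) : Prop :=
  P.natDegree ≤ n ∧ P.coeff n = c

theorem HasTopCoeff.add (hP : HasTopCoeff P n a) (hQ : HasTopCoeff Q n c) :
    HasTopCoeff (P + Q) n (a + c) :=
  ⟨natDegree_add_le_of_degree_le hP.1 hQ.1, by rw [coeff_add, hP.2, hQ.2]⟩

theorem HasTopCoeff.sub (hP : HasTopCoeff P n a) (hQ : HasTopCoeff Q n c) :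
    HasTopCoeff (P - Q) n (a - c) :=
  ⟨max_self n ▸ natDegree_sub_le_of_le hP.1 hQ.1, by rw [coeff_sub, hP.2, hQ.2]⟩

theorem HasTopCoeff.mul (hP : HasTopCoeff P m a) (hQ : HasTopCoeff Q n c) :
    HasTopCoeff (P * Q) (m + n) (a * c) :=
  ⟨natDegree_mul_le_of_le hP.1 hQ.1, by rw [coeff_mul_add_eq_of_natDegree_le hP.1 hQ.1, hP.2, hQ.2]⟩

theorem HasTopCoeff.pow (hP : HasTopCoeff P n a) (k : ℕ) : HasTopCoeff (P ^ k) (k * n) (a ^ k) :=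
  ⟨natDegree_pow_le_of_le k hP.1, by rw [coeff_pow_of_natDegree_le hP.1, hP.2]⟩

theorem HasTopCoeff.C_mul (hP : HasTopCoeff P n a) (c : R) : HasTopCoeff (C c * P) n (c * a) :=
  ⟨(natDegree_C_mul_le c P).trans hP.1, by rw [coeff_C_mul, hP.2]⟩

theorem HasTopCoeff.derivative (hP : HasTopCoeff P (n + 1) a) :
    HasTopCoeff (derivative P) n (a * (n + 1)) :=
  ⟨(natDegree_derivative_le P).trans (by have := hP.1; omega), by rw [coeff_derivative, hP.2]⟩

theorem hasTopCoeff_X_pow (n : ℕ) : HasTopCoeff (X ^ n : R[X]) n 1 :=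
  ⟨natDegree_X_pow_le n, coeff_X_pow_self n⟩

end TopCoeff

/-- The numerator of `(P / Dⁿ)' = (P' D - n P D') / Dⁿ⁺¹`. -/
noncomputable def divPowDerivNum {R : Type*} [CommRing R] (n : ℕ) (P D : R[X]) : R[X] :=
  derivative P * D - C (n : R) * P * derivative D

theorem hasTopCoeff_divPowDerivNum {R : Type*} [CommRing R] {P D : R[X]} {m k : ℕ} {a d : R}
    (hP : HasTopCoeff P (m + 1) a) (hD : HasTopCoeff D (k + 1) d) (n : ℕ) :
    HasTopCoeff (divPowDerivNum n P D) (m + k + 1) ((m + 1 - n * (k + 1)) * a * d) := by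
  have h₁ := hP.derivative.mul hD
  have h₂ := (hP.C_mul (n : R)).mul hD.derivative
  rw [← Nat.add_assoc] at h₁
  rw [Nat.add_right_comm] at h₂
  unfold divPowDerivNum
  convert h₁.sub h₂ using 1
  ring

theorem hasDerivAt_eval_div_eval_pow {𝕜 : Type*} [NontriviallyNormedField 𝕜] (P D : 𝕜[X])
    (n : ℕ) {x : 𝕜} (hx : D.eval x ≠ 0) :
    HasDerivAt (fun t => P.eval t / D.eval t ^ n)
      ((divPowDerivNum n P D).eval x / D.eval x ^ (n + 1)) x := by
  refine ((P.hasDerivAt x).fun_div ((D.hasDerivAt x).fun_pow n) (pow_ne_zero n hx)).congr_deriv ?_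
  rcases n with _ | n
  · simp [divPowDerivNum, hx]
  · simp only [divPowDerivNum, eval_sub, eval_mul, eval_C, Nat.add_sub_cancel]
    field_simp
    ring

theorem iteratedDeriv_two_eval_div_eval_pow {𝕜 : Type*} [NontriviallyNormedField 𝕜]
    (P D : 𝕜[X]) (n : ℕ) {U : Set 𝕜} (hU : IsOpen U) (hD : ∀ x ∈ U, D.eval x ≠ 0)
    {x : 𝕜} (hx : x ∈ U) :
    iteratedDeriv 2 (fun t => P.eval t / D.eval t ^ n) x
      = (divPowDerivNum (n + 1) (divPowDerivNum n P D) D).eval x / D.eval x ^ (n + 2) := by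
  have hderiv : deriv (fun t => P.eval t / D.eval t ^ n)
      =ᶠ[nhds x] fun t => (divPowDerivNum n P D).eval t / D.eval t ^ (n + 1) := by
    filter_upwards [hU.mem_nhds hx] with t ht
    exact (hasDerivAt_eval_div_eval_pow P D n (hD t ht)).deriv
  rw [iteratedDeriv_succ, iteratedDeriv_one, hderiv.deriv_eq]
  exact (hasDerivAt_eval_div_eval_pow _ D (n + 1) (hD x hx)).deriv

section NL4

variable {R : Type*} [CommRing R]

noncomputable def d4 (b e : R) : R[X] := C (4 * e) * X ^ 3 + C b

/-- `W(P)`: `d4 ^ 7` times the left-hand side of (NL4) at `y = P / d4 ^ 3`. -/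
noncomputable def nl4Num (b e : R) (P : R[X]) : R[X] :=
  C (72 * e) * X * P ^ 2 * d4 b e + divPowDerivNum 3 P (d4 b e) ^ 2
    + C (84 * e) * X ^ 2 * P * divPowDerivNum 3 P (d4 b e)
    + P * divPowDerivNum 4 (divPowDerivNum 3 P (d4 b e)) (d4 b e)

theorem hasTopCoeff_d4 (b e : R) : HasTopCoeff (d4 b e) (2 + 1) (4 * e) := by
  refine ⟨?_, ?_⟩
  · unfold d4; compute_degree
  · simp only [d4, coeff_add, coeff_C_mul, coeff_X_pow_self, coeff_C]
    simp

theorem hasTopCoeff_nl4Num (b e : R) {P : R[X]} {m : ℕ} {p : R} (hP : HasTopCoeff P (m + 1) p) :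
    HasTopCoeff (nl4Num b e P) (2 * m + 6) (32 * e ^ 2 * p ^ 2 * (m + 1) * (m - 7)) := by
  have hD := hasTopCoeff_d4 b e
  have hQ := hasTopCoeff_divPowDerivNum hP hD 3
  have hR := hasTopCoeff_divPowDerivNum hQ hD 4
  have h₁ := ((((hasTopCoeff_X_pow 1).C_mul (72 * e)).mul (hP.pow 2)).mul hD)
  have h₂ := hQ.pow 2
  have h₃ := ((((hasTopCoeff_X_pow 2).C_mul (84 * e)).mul hP).mul hQ)
  have h₄ := hP.mul hR
  rw [pow_one, show 1 + 2 * (m + 1) + (2 + 1) = 2 * m + 6 by ring] at h₁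
  rw [show 2 * (m + 2 + 1) = 2 * m + 6 by ring] at h₂
  rw [show 2 + (m + 1) + (m + 2 + 1) = 2 * m + 6 by ring] at h₃
  rw [show m + 1 + (m + 2 + 2 + 1) = 2 * m + 6 by ring] at h₄
  unfold nl4Num
  convert ((h₁.add h₂).add h₃).add h₄ using 1
  push_cast
  ring

end NL4

theorem natDegree_eq_zero_or_eight_of_nl4Num_eq_zero {R : Type*} [CommRing R] [IsDomain R]
    [CharZero R] {b e : R} (he : e ≠ 0) {P : R[X]} (h : nl4Num b e P = 0) :
    P.natDegree = 0 ∨ P.natDegree = 8 := by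
  rcases hdeg : P.natDegree with _ | m
  · exact Or.inl rfl
  have hlead : P.coeff (m + 1) ≠ 0 := by
    rw [← hdeg]
    exact leadingCoeff_ne_zero.mpr (by rintro rfl; simp at hdeg)
  have htop := (hasTopCoeff_nl4Num b e (P := P) ⟨hdeg.le, rfl⟩).2
  rw [h, coeff_zero, eq_comm] at htop
  have hm : (m : R) - 7 = 0 := by
    simpa [he, hlead, Nat.cast_add_one_ne_zero] using htop
  have : m = 7 := by exact_mod_cast sub_eq_zero.mp hm
  omega

theorem eval_nl4Num_eq_zero {𝕜 : Type*} [NontriviallyNormedField 𝕜] {b e : 𝕜} {P : 𝕜[X]}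
    {y : 𝕜 → 𝕜} (hy : y = fun t => P.eval t / (d4 b e).eval t ^ 3) {U : Set 𝕜} (hU : IsOpen U)
    (hD : ∀ x ∈ U, (d4 b e).eval x ≠ 0) {x : 𝕜} (hx : x ∈ U)
    (hNL4 : 72 * e * x * y x ^ 2 + (b + 4 * e * x ^ 3) * deriv y x ^ 2
      + 84 * e * x ^ 2 * y x * deriv y x + (b + 4 * e * x ^ 3) * y x * iteratedDeriv 2 y x = 0) :
    (nl4Num b e P).eval x = 0 := by
  subst hy
  rw [(hasDerivAt_eval_div_eval_pow P _ 3 (hD x hx)).deriv,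
    iteratedDeriv_two_eval_div_eval_pow P _ 3 hU hD hx,
    show b + 4 * e * x ^ 3 = (d4 b e).eval x by simp [d4]; ring] at hNL4
  have hDx := hD x hx
  -- clearing denominators turns `hNL4` into `d4(x)¹² * W(P)(x) = 0`
  field_simp at hNL4
  refine mul_left_cancel₀ (pow_ne_zero 12 hDx) ?_
  simp only [nl4Num, eval_add, eval_mul, eval_pow, eval_C, eval_X]
  linear_combination hNL4

/-- Let `e ≠ 0`, `D₄(x) = 4ex³ + b`, and let `N₄,₁, N₄,₂, N₄,₃` be
the explicit solutions of (L4). If `y = (K₁N₄,₁ + K₂N₄,₂ + K₃N₄,₃)/D₄³` satisfies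
the nonlinear equation (NL4):
`72exy² + (b+4ex³)(y')² + 84ex²yy' + (b+4ex³)yy'' = 0`
on some nonempty open set `U` on which `D₄` does not vanish, then `K₁ = K₂ = K₃ = 0`. -/
theorem statement17
    (b e : ℂ) (he : e ≠ 0)
    (D₄ N₄₁ N₄₂ N₄₃ : ℂ → ℂ)
    (hD₄ : ∀ x : ℂ, D₄ x = 4 * e * x ^ 3 + b)
    (hN₄₁ : ∀ x : ℂ, N₄₁ x = x * (b - 8 * e * x ^ 3))
    (hN₄₂ : ∀ x : ℂ, N₄₂ x = x ^ 2 * (b - 2 * e * x ^ 3))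
    (hN₄₃ : ∀ x : ℂ, N₄₃ x = b ^ 2 - 28 * e * b * x ^ 3 + 16 * e ^ 2 * x ^ 6)
    (K₁ K₂ K₃ : ℂ)
    (y : ℂ → ℂ)
    (hy : ∀ x : ℂ, y x = (K₁ * N₄₁ x + K₂ * N₄₂ x + K₃ * N₄₃ x) / D₄ x ^ 3)
    (U : Set ℂ) (hU : IsOpen U) (hUne : U.Nonempty)
    (hDU : ∀ x ∈ U, D₄ x ≠ 0)
    (hNL4 : ∀ x ∈ U,
      72 * e * x * (y x) ^ 2
        + (b + 4 * e * x ^ 3) * (deriv y x) ^ 2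
        + 84 * e * x ^ 2 * y x * deriv y x
        + (b + 4 * e * x ^ 3) * y x * iteratedDeriv 2 y x = 0) :
    K₁ = 0 ∧ K₂ = 0 ∧ K₃ = 0 := by
  set P : ℂ[X] := C (K₃ * b ^ 2) + C (K₁ * b) * X + C (K₂ * b) * X ^ 2
    - C (28 * e * b * K₃) * X ^ 3 - C (8 * e * K₁) * X ^ 4 - C (2 * e * K₂) * X ^ 5
    + C (16 * e ^ 2 * K₃) * X ^ 6
  have hyP : y = fun t => P.eval t / (d4 b e).eval t ^ 3 := by
    funext t
    simp only [hy, hN₄₁, hN₄₂, hN₄₃, hD₄, P, d4, eval_add, eval_sub, eval_mul, eval_pow, eval_C,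
      eval_X]
    ring
  have hDU' : ∀ x ∈ U, (d4 b e).eval x ≠ 0 := fun x hx => by
    simpa [d4, hD₄, add_comm] using hDU x hx
  obtain ⟨x₀, hx₀⟩ := hUne
  have hW : nl4Num b e P = 0 :=
    eq_zero_of_infinite_isRoot _ <| (infinite_of_mem_nhds x₀ (hU.mem_nhds hx₀)).mono
      fun x hx => eval_nl4Num_eq_zero hyP hU hDU' hx (hNL4 x hx)
  have hdeg : P.natDegree = 0 := by
    have : P.natDegree ≤ 6 := by unfold P; compute_degree
    rcases natDegree_eq_zero_or_eight_of_nl4Num_eq_zero he hW with h | h <;> omega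
  have hcoeff (n : ℕ) (hn : 0 < n) : P.coeff n = 0 := coeff_eq_zero_of_natDegree_lt (hdeg ▸ hn)
  have h₄ := hcoeff 4 (by norm_num)
  have h₅ := hcoeff 5 (by norm_num)
  have h₆ := hcoeff 6 (by norm_num)
  simp only [P, coeff_add, coeff_sub, coeff_C_mul, coeff_X_pow, coeff_X, coeff_C]
    at h₄ h₅ h₆
  norm_num [he] at h₄ h₅ h₆
  exact ⟨h₄, h₅, h₆⟩
end
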